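/- arXiv:1612.03837 — 7 statements merged into one kernel-verified Lean document; each statement's English description precedes it below -/
import Mathlib

section
/- Fix a positive integer m, and let G ∈ ℚ⟦x⟧ be the formal power series whose coefficient of x^n is the number of (m−1)-tuples of nonnegative integers (n_1, …, n_{m−1}) with Σ_{k=1}^{m−1} n_k = n and Σ_{k=1}^{m−1} k·n_k ≡ 0 (mod m). Then m · G = Σ_{d | m} φ(d) · (1 − x) · ((1 − x^d)^{m/d})⁻¹, where the sum ranges over the positive divisors d of m and ((1 − x^d)^{m/d})⁻¹ denotes the multiplicative inverse of the power series (1 − x^d)^{m/d} in ℚ⟦x⟧ (which exists since its constant term is 1). -/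
/-- The number of `(m-1)`-tuples `(n_1, …, n_{m-1})` of nonnegative integers with
`∑ n_k = n` and `∑ k * n_k ≡ 0 (mod m)`. -/
noncomputable def numTuples (m n : ℕ) : ℕ :=
  Nat.card {f : Fin (m - 1) → ℕ //
    (∑ k, f k) = n ∧ (∑ k : Fin (m - 1), ((k : ℕ) + 1) * f k) % m = 0}

/-
Roots of unity filter. With `ω` a primitive `m`-th root of unity, the coefficient of `x ^ n` in
`∏_{k=1}^{m-1} 1 / (1 - ξ ^ k x)` is `∑ ξ ^ (∑ k n_k)` over the tuples with `∑ n_k = n`, so summing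
over all `m`-th roots of unity `ξ` counts the admissible tuples `m` times. If `ξ` has order `d`,
then `∏_{k=0}^{m-1} (1 - ξ ^ k x) = (1 - x ^ d) ^ (m / d)`, and there are `φ d` roots of order `d`.
The identity is proved over `ℂ` and descends to `ℚ`.
-/

open Finset PowerSeries

theorem PowerSeries.mk_pow_mul_one_sub_C_mul_X {R : Type*} [CommRing R] (a : R) :
    mk (a ^ ·) * (1 - C a * X) = 1 := by
  simpa [rescale_mk] using congrArg (rescale a) (mk_one_mul_one_sub_eq_one R)

theorem PowerSeries.map_inv {k K : Type*} [Field k] [Field K] (f : k →+* K) (φ : k⟦X⟧) :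
    map f φ⁻¹ = (map f φ)⁻¹ := by
  have hc : constantCoeff (map f φ) = f (constantCoeff φ) := by
    rw [← coeff_zero_eq_constantCoeff_apply, coeff_map, coeff_zero_eq_constantCoeff_apply]
  by_cases h : constantCoeff φ = 0
  · rw [inv_eq_zero.2 h, inv_eq_zero.2 (by rw [hc, h, map_zero]), map_zero]
  · rw [eq_inv_iff_mul_eq_one (by rwa [hc, map_ne_zero]), ← map_mul,
      PowerSeries.inv_mul_cancel _ h, map_one]

theorem PowerSeries.map_mk {R S : Type*} [Semiring R] [Semiring S] (f : R →+* S) (g : ℕ → R) :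
    map f (mk g) = mk fun n => f (g n) := by
  ext; simp

namespace IsPrimitiveRoot

section Domain

variable {R : Type*} [CommRing R] [IsDomain R]

theorem prod_range_one_sub_C_pow_mul_X {ζ : R} {d : ℕ} (hζ : IsPrimitiveRoot ζ d) (hd : 0 < d) :
    ∏ k ∈ range d, (1 - C (ζ ^ k) * X : R⟦X⟧) = 1 - X ^ d := by
  -- Over `R⟦X⟧`, the roots of `Y ^ d - X ^ d` are the `ζ ^ k * X`; now put `Y = 1`.
  have h := X_pow_sub_C_eq_prod (hζ.map_of_injective C_injective) hd
    (rfl : (X : R⟦X⟧) ^ d = X ^ d)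
  simpa [Polynomial.eval_prod, ← map_pow, eq_comm] using congrArg (Polynomial.eval 1) h

theorem prod_range_one_sub_C_pow_mul_X_of_dvd {ζ : R} {d m : ℕ} (hζ : IsPrimitiveRoot ζ d)
    (hd : 0 < d) (hdm : d ∣ m) :
    ∏ k ∈ range m, (1 - C (ζ ^ k) * X : R⟦X⟧) = (1 - X ^ d) ^ (m / d) := by
  obtain ⟨e, rfl⟩ := hdm
  rw [Nat.mul_div_cancel_left e hd]
  induction e with
  | zero => simp
  | succ e ih =>
    rw [Nat.mul_succ, prod_range_add, ih, pow_succ, ← hζ.prod_range_one_sub_C_pow_mul_X hd]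
    simp [pow_add, pow_mul, hζ.pow_eq_one]

theorem sum_range_pow_mul {ω : R} {m : ℕ} (hω : IsPrimitiveRoot ω m) (t : ℕ) :
    ∑ j ∈ range m, ω ^ (j * t) = if m ∣ t then (m : R) else 0 := by
  simp only [mul_comm _ t, pow_mul]
  split_ifs with h
  · simp [(hω.pow_eq_one_iff_dvd t).2 h]
  · have hne : ω ^ t - 1 ≠ 0 := sub_ne_zero.2 (mt (hω.pow_eq_one_iff_dvd t).1 h)
    have hgeom := geom_sum_mul (ω ^ t) m
    rw [pow_right_comm, hω.pow_eq_one, one_pow, sub_self] at hgeom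
    exact (mul_eq_zero.1 hgeom).resolve_right hne

theorem sum_range_pow_eq_sum_nthRootsFinset {ω : R} {m : ℕ} (hω : IsPrimitiveRoot ω m)
    (hm : 0 < m) {M : Type*} [AddCommMonoid M] (f : R → M) :
    ∑ j ∈ range m, f (ω ^ j) = ∑ ξ ∈ Polynomial.nthRootsFinset m (1 : R), f ξ := by
  have : NeZero m := ⟨hm.ne'⟩
  refine sum_nbij (ω ^ ·) (fun j _ => ?_)
    (fun i hi j hj h => hω.pow_inj (mem_range.1 hi) (mem_range.1 hj) h) (fun ξ hξ => ?_)
    (fun _ _ => rfl)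
  · rw [Polynomial.mem_nthRootsFinset hm, ← pow_mul, mul_comm, pow_mul, hω.pow_eq_one, one_pow]
  · obtain ⟨i, hi, rfl⟩ := hω.eq_pow_of_pow_eq_one ((Polynomial.mem_nthRootsFinset hm 1).1 hξ)
    exact ⟨i, mem_range.2 hi, rfl⟩

theorem sum_nthRootsFinset_eq_sum_divisors {m : ℕ} {M : Type*} [AddCommMonoid M] (f : R → M) :
    ∑ ξ ∈ Polynomial.nthRootsFinset m (1 : R), f ξ =
      ∑ d ∈ m.divisors, ∑ ξ ∈ primitiveRoots d R, f ξ := by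
  classical
  rw [nthRoots_one_eq_biUnion_primitiveRoots, sum_biUnion]
  exact fun a _ b _ hab => IsPrimitiveRoot.disjoint hab

end Domain

theorem one_sub_X_mul_inv_eq_prod {K : Type*} [Field K] {ζ : K} {d m : ℕ}
    (hζ : IsPrimitiveRoot ζ d) (hdm : d ∣ m) (hm : 0 < m) :
    (1 - X) * ((1 - X ^ d : K⟦X⟧) ^ (m / d))⁻¹ =
      ∏ k : Fin (m - 1), PowerSeries.mk fun n => (ζ ^ ((k : ℕ) + 1)) ^ n := by
  have hd := Nat.pos_of_dvd_of_pos hdm hm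
  rw [eq_comm, eq_mul_inv_iff_mul_eq (by simp [hd.ne']),
    ← hζ.prod_range_one_sub_C_pow_mul_X_of_dvd hd hdm]
  obtain ⟨m, rfl⟩ := Nat.exists_eq_add_one_of_ne_zero hm.ne'
  rw [Nat.add_sub_cancel, prod_range_succ', ← mul_assoc,
    ← Fin.prod_univ_eq_prod_range fun k => 1 - C (ζ ^ (k + 1)) * X, ← prod_mul_distrib]
  simp only [mk_pow_mul_one_sub_C_mul_X, prod_const_one, one_mul, pow_zero, map_one]

end IsPrimitiveRoot

theorem numTuples_eq_card (m n : ℕ) :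
    numTuples m n = #{l ∈ finsuppAntidiag (univ : Finset (Fin (m - 1))) n |
      (∑ k : Fin (m - 1), ((k : ℕ) + 1) * l k) % m = 0} := by
  rw [← Nat.card_eq_finsetCard, numTuples]
  exact Nat.card_congr (Finsupp.equivFunOnFinite.symm.subtypeEquiv fun f => by
    simp [mem_finsuppAntidiag])

theorem natCast_mul_mk_numTuples_eq_sum_nthRootsFinset {R : Type*} [CommRing R] [IsDomain R]
    {ω : R} {m : ℕ} (hω : IsPrimitiveRoot ω m) (hm : 0 < m) :
    (m : R⟦X⟧) * mk (fun n => (numTuples m n : R)) =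
      ∑ ξ ∈ Polynomial.nthRootsFinset m (1 : R),
        ∏ k : Fin (m - 1), mk fun n => (ξ ^ ((k : ℕ) + 1)) ^ n := by
  classical
  have hfilter (l : Fin (m - 1) →₀ ℕ) :
      ∑ ξ ∈ Polynomial.nthRootsFinset m (1 : R), ∏ k : Fin (m - 1), (ξ ^ ((k : ℕ) + 1)) ^ l k =
        if (∑ k : Fin (m - 1), ((k : ℕ) + 1) * l k) % m = 0 then (m : R) else 0 := by
    simp_rw [← pow_mul, prod_pow_eq_pow_sum, ← hω.sum_range_pow_eq_sum_nthRootsFinset hm,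
      ← pow_mul, hω.sum_range_pow_mul, Nat.dvd_iff_mod_eq_zero]
  ext n
  simp only [map_sum, coeff_prod, coeff_mk]
  rw [sum_comm, sum_congr rfl fun l _ => hfilter l, ← sum_filter, sum_const,
    ← map_natCast (C (R := R)), coeff_C_mul, coeff_mk, numTuples_eq_card, nsmul_eq_mul, mul_comm]

theorem natCast_mul_mk_numTuples_eq_sum_totient {K : Type*} [Field K] {ω : K} {m : ℕ}
    (hω : IsPrimitiveRoot ω m) (hm : 0 < m) :
    (m : K⟦X⟧) * mk (fun n => (numTuples m n : K)) =
      ∑ d ∈ m.divisors, (Nat.totient d : K⟦X⟧) * ((1 - X) * ((1 - X ^ d) ^ (m / d))⁻¹) := by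
  rw [natCast_mul_mk_numTuples_eq_sum_nthRootsFinset hω hm,
    IsPrimitiveRoot.sum_nthRootsFinset_eq_sum_divisors]
  refine sum_congr rfl fun d hd => ?_
  have hdm := Nat.dvd_of_mem_divisors hd
  rw [sum_congr rfl fun ξ hξ =>
      ((isPrimitiveRoot_of_mem_primitiveRoots hξ).one_sub_X_mul_inv_eq_prod hdm hm).symm,
    sum_const, (hω.pow hm (Nat.div_mul_cancel hdm).symm).card_primitiveRoots, nsmul_eq_mul]

theorem stmt3 (m : ℕ) (hm : 0 < m) :
    (m : PowerSeries ℚ) * PowerSeries.mk (fun n => (numTuples m n : ℚ)) =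
      ∑ d ∈ m.divisors, (Nat.totient d : PowerSeries ℚ) *
        ((1 - PowerSeries.X) * ((1 - PowerSeries.X ^ d) ^ (m / d))⁻¹) := by
  apply map_injective (algebraMap ℚ ℂ) (algebraMap ℚ ℂ).injective
  simpa [PowerSeries.map_inv, PowerSeries.map_mk] using
    natCast_mul_mk_numTuples_eq_sum_totient (Complex.isPrimitiveRoot_exp m hm.ne') hm
end

section
/- For any prime p, the Catalan number C_{p−1} is congruent to −1 modulo p; equivalently, p divides 1 + C_{p−1}. -/
lemma catalan_eq_sub (n : ℕ) :
    (catalan n : ℤ) = (2 * n).choose n - (2 * n).choose (n + 1) := by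
  have h1 : ((n : ℤ) + 1) * catalan n = (2 * n).choose n := by
    have := succ_mul_catalan_eq_centralBinom n
    have := congrArg (fun x : ℕ => (x : ℤ)) this
    simpa [Nat.centralBinom] using this
  have h2 : ((2 * n).choose (n + 1) : ℤ) * ((n : ℤ) + 1) = ((2 * n).choose n : ℤ) * n := by
    have := Nat.choose_succ_right_eq (2 * n) n
    have h3 : 2 * n - n = n := by omega
    rw [h3] at this
    exact_mod_cast congrArg (fun x : ℕ => (x : ℤ)) this
  have hne : ((n : ℤ) + 1) ≠ 0 := by positivity
  have : ((n : ℤ) + 1) * (catalan n : ℤ) =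
      ((n : ℤ) + 1) * (((2 * n).choose n : ℤ) - (2 * n).choose (n + 1)) := by
    rw [h1]; nlinarith [h1, h2]
  exact mul_left_cancel₀ hne this

lemma lucas_aux (q : ℕ) (hq : (q + 2).Prime) :
    ((2 * q + 2).choose (q + 1) : ℤ) ≡ 0 [ZMOD ((q + 2 : ℕ) : ℤ)] ∧
    ((2 * q + 2).choose (q + 2) : ℤ) ≡ 1 [ZMOD ((q + 2 : ℕ) : ℤ)] := by
  haveI : Fact (q + 2).Prime := ⟨hq⟩
  have e1 : 2 * q + 2 = q + (q + 2) := by omega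
  have emod : (2 * q + 2) % (q + 2) = q := by
    rw [e1, Nat.add_mod_right]; exact Nat.mod_eq_of_lt (by omega)
  have ediv : (2 * q + 2) / (q + 2) = 1 := by
    rw [e1, Nat.add_div_right _ (by omega), Nat.div_eq_of_lt (by omega)]
  have emod2 : (q + 1) % (q + 2) = q + 1 := Nat.mod_eq_of_lt (by omega)
  have ediv2 : (q + 1) / (q + 2) = 0 := Nat.div_eq_of_lt (by omega)
  constructor
  · have h := Choose.choose_modEq_choose_mod_mul_choose_div
      (n := 2 * q + 2) (k := q + 1) (p := q + 2)
    rw [emod, ediv, emod2, ediv2, Nat.choose_eq_zero_of_lt (Nat.lt_succ_self q)] at h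
    simpa using h
  · have h := Choose.choose_modEq_choose_mod_mul_choose_div
      (n := 2 * q + 2) (k := q + 2) (p := q + 2)
    rw [emod, ediv, Nat.mod_self, Nat.div_self (by omega)] at h
    simpa using h

theorem stmt9 (p : ℕ) (hp : p.Prime) :
    (catalan (p - 1) : ℤ) ≡ -1 [ZMOD (p : ℤ)] ∧ p ∣ 1 + catalan (p - 1) := by
  obtain ⟨q, rfl⟩ : ∃ q, p = q + 2 := ⟨p - 2, by have := hp.two_le; omega⟩
  obtain ⟨hA, hB⟩ := lucas_aux q hp
  have key : (catalan (q + 2 - 1) : ℤ) ≡ -1 [ZMOD ((q + 2 : ℕ) : ℤ)] := by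
    have h1 : q + 2 - 1 = q + 1 := by omega
    rw [h1, catalan_eq_sub]
    have h2 : 2 * (q + 1) = 2 * q + 2 := by ring
    have h3 : q + 1 + 1 = q + 2 := by omega
    rw [h2, h3]
    calc ((2 * q + 2).choose (q + 1) : ℤ) - (2 * q + 2).choose (q + 2)
        ≡ 0 - 1 [ZMOD ((q + 2 : ℕ) : ℤ)] := Int.ModEq.sub hA hB
      _ = -1 := by ring
  refine ⟨key, ?_⟩
  have hdvd : ((q + 2 : ℕ) : ℤ) ∣ (1 + catalan (q + 2 - 1) : ℤ) := by
    have h2 : (1 : ℤ) + catalan (q + 2 - 1) = catalan (q + 2 - 1) - (-1) := by ring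
    rw [h2]
    exact Int.ModEq.dvd key.symm
  exact_mod_cast hdvd
end

section
/- For any primes q and p such that q divides p−1, the binomial coefficient binom(q+p−2, p) is congruent to q−1 modulo q(q−1); equivalently, q−1 divides binom(q+p−2, p) and the quotient binom(q+p−2, p)/(q−1) is congruent to 1 modulo q. -/
theorem stmt10 (q p : ℕ) (hq : q.Prime) (hp : p.Prime) (hqp : q ∣ (p - 1)) :
    Nat.choose (q + p - 2) p ≡ q - 1 [MOD q * (q - 1)] ∧
    (q - 1) ∣ Nat.choose (q + p - 2) p ∧
    Nat.choose (q + p - 2) p / (q - 1) ≡ 1 [MOD q] := by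
  have hq2 := hq.two_le
  have hp2 := hp.two_le
  rcases eq_or_lt_of_le hq2 with h2 | h3
  · -- q = 2
    subst h2
    rw [show 2 + p - 2 = p by omega, Nat.choose_self]
    norm_num [Nat.ModEq]
  · -- q ≥ 3
    have hodd : Odd q := hq.odd_of_ne_two (by omega)
    have hqlep : q + 1 ≤ p := by
      have := Nat.le_of_dvd (by omega) hqp; omega
    haveI : Fact q.Prime := ⟨hq⟩
    set n := q + p - 2 with hn
    have hpc : ((p : ℕ) : ZMod q) = 1 := by
      have h0 : ((p - 1 : ℕ) : ZMod q) = 0 :=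
        (ZMod.natCast_eq_zero_iff _ _).mpr hqp
      rw [Nat.cast_sub (by omega), Nat.cast_one] at h0
      linear_combination h0
    have hnc : ((n : ℕ) : ZMod q) = -1 := by
      rw [show n = p + (q - 2) by omega, Nat.cast_add, hpc, Nat.cast_sub hq2,
        ZMod.natCast_self]
      push_cast
      ring
    have hq1 : ((q - 1 : ℕ) : ZMod q) = -1 := by
      rw [Nat.cast_sub (by omega), ZMod.natCast_self, Nat.cast_one]; ring
    have hsym : n.choose (q - 2) = n.choose p := by
      have h1 : p ≤ n := by omega
      have := Nat.choose_symm h1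
      rwa [show n - p = q - 2 by omega] at this
    have hdf : n.descFactorial (q - 2) = Nat.factorial (q - 2) * n.choose (q - 2) :=
      Nat.descFactorial_eq_factorial_mul_choose n (q - 2)
    have hprodc : ((n.descFactorial (q - 2) : ℕ) : ZMod q)
        = (-1) ^ (q - 2) * ((Nat.factorial (q - 2) : ℕ) : ZMod q) := by
      rw [Nat.descFactorial_eq_prod_range, ← Finset.prod_range_add_one_eq_factorial,
        Nat.cast_prod, Nat.cast_prod]
      have hstep : ∀ i ∈ Finset.range (q - 2),
          ((n - i : ℕ) : ZMod q) = (-1) * ((i + 1 : ℕ) : ZMod q) := by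
        intro i hi
        have hiq : i < q - 2 := Finset.mem_range.mp hi
        rw [Nat.cast_sub (by omega : i ≤ n), hnc]
        push_cast
        ring
      rw [Finset.prod_congr rfl hstep, Finset.prod_mul_distrib, Finset.prod_const,
        Finset.card_range]
    have hfac : ((Nat.factorial (q - 2) : ℕ) : ZMod q) = 1 := by
      have hw : ((Nat.factorial (q - 1) : ℕ) : ZMod q) = -1 := ZMod.wilsons_lemma q
      rw [show q - 1 = (q - 2) + 1 by omega, Nat.factorial_succ,
        show q - 2 + 1 = q - 1 by omega, Nat.cast_mul, hq1, neg_one_mul] at hw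
      exact neg_injective hw
    have hodd2 : Odd (q - 2) := Nat.Odd.sub_even (by omega) hodd even_two
    have hCq : ((n.choose p : ℕ) : ZMod q) = -1 := by
      have hcast := congrArg (Nat.cast : ℕ → ZMod q) hdf
      rw [Nat.cast_mul, hfac, one_mul, hsym, hprodc, hfac, mul_one,
        Odd.neg_one_pow hodd2] at hcast
      exact hcast.symm
    have hkey : n.choose (q - 1) * (q - 1) = n.choose p * p := by
      have h := Nat.choose_succ_right_eq n (q - 2)
      rwa [show q - 2 + 1 = q - 1 by omega, show n - (q - 2) = p by omega, hsym] at h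
    have hcop : Nat.Coprime (q - 1) p :=
      Nat.Coprime.symm ((hp.coprime_iff_not_dvd).mpr (fun h => by
        have := Nat.le_of_dvd (by omega) h; omega))
    have hdvd : (q - 1) ∣ n.choose p :=
      hcop.dvd_of_dvd_mul_right ⟨n.choose (q - 1), by rw [← hkey]; ring⟩
    set m := n.choose p / (q - 1) with hmdef
    have hm : (q - 1) * m = n.choose p := Nat.mul_div_cancel' hdvd
    have hmq : ((m : ℕ) : ZMod q) = 1 := by
      have hcast := congrArg (Nat.cast : ℕ → ZMod q) hm
      rw [Nat.cast_mul, hCq, hq1, neg_one_mul] at hcast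
      exact neg_injective hcast
    have hm1 : m ≡ 1 [MOD q] :=
      (ZMod.natCast_eq_natCast_iff m 1 q).mp (by rw [hmq, Nat.cast_one])
    refine ⟨?_, hdvd, hm1⟩
    have hmod := Nat.ModEq.mul_left' (q - 1) hm1
    rwa [hm, mul_one, mul_comm (q - 1) q] at hmod
end

section
/- Let p and q be distinct primes such that q does not divide p−1 and p does not divide q−1. Then q(q−1) divides binom(q+p−2, p); equivalently, p!·q! divides (p+q−2)!. -/
theorem stmt11 (p q : ℕ) (hp : p.Prime) (hq : q.Prime) (hne : p ≠ q)
    (h1 : ¬ q ∣ (p - 1)) (h2 : ¬ p ∣ (q - 1)) :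
    q * (q - 1) ∣ Nat.choose (q + p - 2) p ∧
    Nat.factorial p * Nat.factorial q ∣ Nat.factorial (p + q - 2) := by
  have hq2 := hq.two_le
  obtain ⟨a, rfl⟩ : ∃ a, q = a + 2 := ⟨q - 2, by omega⟩
  have hqp : ¬ (a + 2) ∣ p := fun h =>
    hne ((Nat.prime_dvd_prime_iff_eq hq hp).mp h).symm
  have hq1 : ¬ (a + 2) ∣ (p - 1) := h1
  have hp1 : ¬ p ∣ (a + 1) := by simpa using h2
  -- key identities
  have id1 : Nat.choose (p + a) (a + 1) * (a + 1) = Nat.choose (p + a) a * p := by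
    have := Nat.choose_succ_right_eq (p + a) a
    simpa [Nat.add_sub_cancel] using this
  have id2 : Nat.choose (p + a) (a + 2) * (a + 2) = Nat.choose (p + a) (a + 1) * (p - 1) := by
    have := Nat.choose_succ_right_eq (p + a) (a + 1)
    have hsub : p + a - (a + 1) = p - 1 := by omega
    simpa [hsub] using this
  -- q divides choose (p+a) (a+1)
  have d1 : (a + 2) ∣ Nat.choose (p + a) (a + 1) := by
    have : (a + 2) ∣ Nat.choose (p + a) (a + 1) * (p - 1) := ⟨Nat.choose (p + a) (a + 2), by linarith [id2]⟩
    rcases (Nat.Prime.dvd_mul hq).mp this with h | h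
    · exact h
    · exact absurd h hq1
  -- q divides choose (p+a) a
  have d2 : (a + 2) ∣ Nat.choose (p + a) a := by
    have : (a + 2) ∣ Nat.choose (p + a) a * p := by
      rw [← id1]; exact Dvd.dvd.mul_right d1 _
    rcases (Nat.Prime.dvd_mul hq).mp this with h | h
    · exact h
    · exact absurd h hqp
  -- (q-1) divides choose (p+a) a
  have d3 : (a + 1) ∣ Nat.choose (p + a) a := by
    have hdvd : (a + 1) ∣ Nat.choose (p + a) a * p := ⟨Nat.choose (p + a) (a + 1), by linarith [id1]⟩
    have hcop : Nat.Coprime (a + 1) p := (hp.coprime_iff_not_dvd.mpr hp1).symm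
    exact (Nat.Coprime.dvd_of_dvd_mul_right hcop hdvd)
  have hcop2 : Nat.Coprime (a + 2) (a + 1) := by
    have : Nat.Coprime ((a + 1) + 1) (a + 1) :=
      Nat.coprime_self_add_left.mpr (Nat.coprime_one_left _)
    simpa [Nat.add_assoc] using this
  have dmul : (a + 2) * (a + 1) ∣ Nat.choose (p + a) a :=
    Nat.Coprime.mul_dvd_of_dvd_of_dvd hcop2 d2 d3
  have hsymm : Nat.choose (p + a) a = Nat.choose (p + a) p := by
    have := Nat.choose_symm (Nat.le_add_right p a)
    simpa [Nat.add_sub_cancel_left] using this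
  have heq : a + 2 + p - 2 = p + a := by omega
  have heq2 : p + (a + 2) - 2 = p + a := by omega
  constructor
  · rw [heq, ← hsymm]
    simpa using dmul
  · rw [heq2]
    obtain ⟨c, hc⟩ := dmul
    have hfact : Nat.choose (p + a) p * Nat.factorial p * Nat.factorial a = Nat.factorial (p + a) := by
      have := Nat.choose_mul_factorial_mul_factorial (Nat.le_add_right p a)
      simpa [Nat.add_sub_cancel_left] using this
    refine ⟨c, ?_⟩
    rw [← hfact, ← hsymm, hc]
    simp [Nat.factorial_succ]
    ring
end

section
/- Let p and q be distinct primes with p not dividing q−1. Let h ∈ SU(p) be an element of order q such that 1 is not an eigenvalue of h (i.e., 1 is not in the spectrum of h as a complex matrix). If t is a positive integer such that h^t is conjugate to h in SU(p), then t ≡ 1 (mod q). -/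
/-!
For `a : ZMod q` let `m a` be the dimension of the `ζ ^ a`-eigenspace of `h`, where `ζ` is a
primitive `q`-th root of unity. As `h ^ q = 1`, `h` is diagonalisable, so `∑ a, m a = p`, and
`m 0 = 0` because `1` is not an eigenvalue. Since `h` has prime order `q` and is conjugate to
`h ^ t`, `t` is prime to `q`, so the `ζ ^ a`-eigenspace of `h` is the `ζ ^ (t * a)`-eigenspace
of `h ^ t`; hence `m (t * a) = m a`. On `(ZMod q)ˣ`, `m` is therefore constant on the cosets of
the subgroup generated by `t`, so the order of `t` modulo `q` divides `p`. It also divides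
`q - 1`, which `p` does not divide, so it is `1`.
-/

noncomputable instance (n : ℕ) : Group (Matrix.specialUnitaryGroup (Fin n) ℂ) :=
  { (inferInstance : Monoid (Matrix.specialUnitaryGroup (Fin n) ℂ)) with
    inv := fun A => ⟨star A.1, by
      have hA := Matrix.mem_specialUnitaryGroup_iff.mp A.2
      rw [Matrix.mem_specialUnitaryGroup_iff]
      refine ⟨Unitary.star_mem hA.1, ?_⟩
      rw [Matrix.star_eq_conjTranspose, Matrix.det_conjTranspose, hA.2, star_one]⟩
    inv_mul_cancel := fun A => Subtype.ext ((Unitary.mem_iff.mp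
      (Matrix.mem_specialUnitaryGroup_iff.mp A.2).1).1) }

open Module End

theorem pow_val_natCast_mul {M : Type*} [Monoid M] {x : M} {q : ℕ} [NeZero q] (hx : x ^ q = 1)
    (t : ℕ) (a : ZMod q) : x ^ ((t : ZMod q) * a).val = (x ^ a.val) ^ t := by
  rw [← pow_mul]
  refine pow_eq_pow_of_modEq ?_ hx
  rw [← ZMod.natCast_eq_natCast_iff]
  simp [mul_comm]

theorem coprime_orderOf_of_isConj_pow {G : Type*} [Monoid G] {x : G} {t : ℕ}
    (hx : (orderOf x).Prime) (hconj : IsConj x (x ^ t)) : t.Coprime (orderOf x) := by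
  refine ((Nat.coprime_or_dvd_of_prime hx t).resolve_right fun hdvd => hx.ne_one ?_).symm
  rw [orderOf_dvd_iff_pow_eq_one.mp hdvd, isConj_one_left] at hconj
  rw [hconj, orderOf_one]

theorem orderOf_dvd_sum_of_mul_right_invariant {G : Type*} [Group G] [Fintype G] (u : G)
    (n : G → ℕ) (hn : ∀ a, n (a * u) = n a) : orderOf u ∣ ∑ a, n a := by
  set H := Subgroup.zpowers u
  have hpow : ∀ (a : G) (k : ℕ), n (a * u ^ k) = n a := by
    intro a k
    induction k with
    | zero => simp
    | succ k ih => rw [pow_succ, ← mul_assoc, hn, ih]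
  have hfiber : ∀ a b : G, (a : G ⧸ H) = b → n b = n a := by
    intro a b hab
    obtain ⟨k, hk⟩ := mem_powers_iff_mem_zpowers.mpr (QuotientGroup.eq.mp hab)
    rw [← mul_inv_cancel_left a b, ← hk, hpow]
  rw [← Fintype.sum_fiberwise (fun a : G => (a : G ⧸ H)) n]
  refine Finset.dvd_sum fun c _ => ?_
  obtain ⟨a, rfl⟩ := QuotientGroup.mk_surjective c
  have hcard : Fintype.card {b : G // (b : G ⧸ H) = a} = orderOf u := by
    rw [← Nat.card_eq_fintype_card, ← Nat.card_zpowers, ← mul_one (Nat.card H),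
      ← Nat.card_unique (α := ({(a : G ⧸ H)} : Set (G ⧸ H))),
      ← QuotientGroup.card_preimage_mk]
    rfl
  rw [Fintype.sum_congr _ _ fun b : {b : G // (b : G ⧸ H) = a} => hfiber a b b.2.symm,
    Finset.sum_const, Finset.card_univ, hcard, smul_eq_mul]
  exact dvd_mul_right _ _

theorem Fintype.sum_eq_apply_zero_add_sum_units {M₀ M : Type*} [GroupWithZero M₀] [Fintype M₀]
    [DecidableEq M₀] [AddCommMonoid M] (g : M₀ → M) :
    ∑ a, g a = g 0 + ∑ u : M₀ˣ, g u := by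
  rw [Fintype.sum_eq_add_sum_compl 0]
  exact congrArg _ ((Finset.sum_subtype _ (by simp) g).trans
    (Fintype.sum_equiv unitsEquivNeZero.symm _ _ fun _ => rfl))

namespace Module.End

variable {K V : Type*} [Field K] [AddCommGroup V] [Module K V]

theorem finrank_eigenspace_eq_of_isConj {f g : End K V} (hfg : IsConj f g) (μ : K) :
    finrank K (eigenspace f μ) = finrank K (eigenspace g μ) := by
  obtain ⟨c, hc⟩ := hfg
  let e := LinearMap.GeneralLinearGroup.toLinearEquiv c
  have hmap : (eigenspace f μ).map (e : End K V) = eigenspace g μ := by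
    ext x
    rw [Submodule.map_equiv_eq_comap_symm, Submodule.mem_comap, mem_eigenspace_iff,
      mem_eigenspace_iff]
    have hinv : f ((↑c⁻¹ : End K V) x) = (↑c⁻¹ : End K V) (g x) :=
      LinearMap.congr_fun hc.units_inv_symm_left.eq.symm x
    change f ((↑c⁻¹ : End K V) x) = μ • (↑c⁻¹ : End K V) x ↔ _
    rw [hinv, ← map_smul]
    exact e.symm.injective.eq_iff
  rw [← hmap, LinearEquiv.finrank_map_eq]

theorem eigenspace_le_eigenspace_pow (f : End K V) (μ : K) (n : ℕ) :
    eigenspace f μ ≤ eigenspace (f ^ n) (μ ^ n) := by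
  intro x hx
  rw [mem_eigenspace_iff] at hx ⊢
  induction n with
  | zero => simp
  | succ n ih => rw [pow_succ, pow_succ, mul_apply, hx, map_smul, ih, smul_smul, mul_comm]

theorem eigenspace_pow_eq_of_coprime {f : End K V} {μ : K} {q t : ℕ} (hq : q ≠ 0)
    (hf : f ^ q = 1) (hμ : μ ^ q = 1) (ht : t.Coprime q) :
    eigenspace (f ^ t) (μ ^ t) = eigenspace f μ := by
  obtain ⟨t', -, htt'⟩ := Nat.exists_mul_mod_eq_of_coprime 1 ht hq
  have hmod : t * t' ≡ 1 [MOD q] := htt'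
  refine le_antisymm ?_ (eigenspace_le_eigenspace_pow f μ t)
  simpa only [← pow_mul, pow_eq_pow_of_modEq hmod hf, pow_eq_pow_of_modEq hmod hμ, pow_one]
    using eigenspace_le_eigenspace_pow (f ^ t) (μ ^ t) t'

theorem sum_finrank_eigenspace_of_pow_eq_one [IsAlgClosed K] [FiniteDimensional K V]
    {f : End K V} {q : ℕ} [NeZero q] {ζ : K} (hζ : IsPrimitiveRoot ζ q) (hf : f ^ q = 1) :
    ∑ a : ZMod q, finrank K (eigenspace f (ζ ^ a.val)) = finrank K V := by
  set E : ZMod q → Submodule K V := fun a => eigenspace f (ζ ^ a.val)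
  have hindep : iSupIndep E :=
    f.eigenspaces_iSupIndep.comp fun a b hab =>
      ZMod.val_injective q (hζ.pow_inj a.val_lt b.val_lt hab)
  have hss : f.IsSemisimple := by
    have : NeZero (q : K) := hζ.neZero'
    refine isSemisimple_of_squarefree_aeval_eq_zero (p := Polynomial.X ^ q - 1)
      (Polynomial.X_pow_sub_one_separable_iff.mpr (NeZero.ne _)).squarefree ?_
    simp [hf]
  have hsup : ⨆ a, E a = ⊤ := by
    refine top_unique (hss.iSup_eigenspace_eq_top ▸ iSup_le fun μ => ?_)
    by_cases hμ : f.HasEigenvalue μ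
    · obtain ⟨v, hv⟩ := hμ.exists_hasEigenvector
      have hμq : μ ^ q = 1 :=
        smul_left_injective K hv.2 (by simpa [hf] using (hv.pow_apply q).symm)
      obtain ⟨i, hi, rfl⟩ := hζ.eq_pow_of_pow_eq_one hμq
      simpa [E, ZMod.val_cast_of_lt hi] using le_iSup E (i : ZMod q)
    · rw [hasEigenvalue_iff, not_ne_iff] at hμ
      simp [hμ]
  have hint : DirectSum.IsInternal E :=
    (DirectSum.isInternal_submodule_iff_iSupIndep_and_iSup_eq_top E).mpr ⟨hindep, hsup⟩
  rw [← (LinearEquiv.ofBijective (DirectSum.coeLinearMap E) hint).finrank_eq, finrank_directSum]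

theorem orderOf_unitOfCoprime_dvd_finrank [IsAlgClosed K] [FiniteDimensional K V]
    {q : ℕ} [Fact q.Prime] {ζ : K} (hζ : IsPrimitiveRoot ζ q) {f : End K V} (hf : f ^ q = 1)
    (h1 : ¬ f.HasEigenvalue 1) {t : ℕ} (ht : t.Coprime q) (hconj : IsConj f (f ^ t)) :
    orderOf (ZMod.unitOfCoprime t ht) ∣ finrank K V := by
  set m : ZMod q → ℕ := fun a => finrank K (eigenspace f (ζ ^ a.val))
  have hm : ∀ a, m (t * a) = m a := fun a => by
    have hμ : (ζ ^ a.val) ^ q = 1 := by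
      rw [← pow_mul, mul_comm, pow_mul, hζ.pow_eq_one, one_pow]
    simp only [m]
    rw [pow_val_natCast_mul hζ.pow_eq_one, finrank_eigenspace_eq_of_isConj hconj,
      eigenspace_pow_eq_of_coprime (NeZero.ne q) hf hμ ht]
  have hm0 : m 0 = 0 := by simpa [m, hasEigenvalue_iff] using h1
  have hsum : ∑ a, m a = finrank K V := sum_finrank_eigenspace_of_pow_eq_one hζ hf
  rw [← hsum, Fintype.sum_eq_apply_zero_add_sum_units m, hm0, zero_add]
  exact orderOf_dvd_sum_of_mul_right_invariant _ (fun x : (ZMod q)ˣ => m x) fun x => by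
    rw [Units.val_mul, ZMod.coe_unitOfCoprime, mul_comm, hm]

end Module.End

theorem stmt12_general (p q : ℕ) (hp : p.Prime) (hq : q.Prime) (hpq : ¬ p ∣ (q - 1))
    (h : Matrix.specialUnitaryGroup (Fin p) ℂ) (hord : orderOf h = q)
    (hspec : (1 : ℂ) ∉ spectrum ℂ (h : Matrix (Fin p) (Fin p) ℂ))
    (t : ℕ) (hconj : IsConj h (h ^ t)) :
    t ≡ 1 [MOD q] := by
  have : Fact q.Prime := ⟨hq⟩
  have ht : t.Coprime q := hord ▸ coprime_orderOf_of_isConj_pow (hord ▸ hq) hconj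
  let φ : Matrix.specialUnitaryGroup (Fin p) ℂ →* Module.End ℂ (Fin p → ℂ) :=
    Matrix.toLinAlgEquiv'.toMonoidHom.comp (Submonoid.subtype _)
  have hf : φ h ^ q = 1 := by rw [← map_pow, ← hord, pow_orderOf_eq_one, map_one]
  have h1 : ¬ (φ h).HasEigenvalue 1 := by
    rw [hasEigenvalue_iff_mem_spectrum]
    change 1 ∉ spectrum ℂ (Matrix.toLinAlgEquiv' (h : Matrix (Fin p) (Fin p) ℂ))
    rwa [AlgEquiv.spectrum_eq]
  have hdvd := orderOf_unitOfCoprime_dvd_finrank (Complex.isPrimitiveRoot_exp q hq.ne_zero) hf h1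
    ht (by simpa using φ.map_isConj hconj)
  rw [Module.finrank_fin_fun] at hdvd
  have hone : orderOf (ZMod.unitOfCoprime t ht) = 1 :=
    (hp.eq_one_or_self_of_dvd _ hdvd).resolve_right fun hp' =>
      hpq (hp' ▸ ZMod.orderOf_units_dvd_card_sub_one _)
  have htq := congrArg Units.val (orderOf_eq_one_iff.mp hone)
  rw [ZMod.coe_unitOfCoprime, Units.val_one, ← Nat.cast_one] at htq
  exact (ZMod.natCast_eq_natCast_iff t 1 q).mp htq

theorem stmt12 (p q : ℕ) (hp : p.Prime) (hq : q.Prime) (hne : p ≠ q) (hpq : ¬ p ∣ (q - 1))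
    (h : Matrix.specialUnitaryGroup (Fin p) ℂ) (hord : orderOf h = q)
    (hspec : (1 : ℂ) ∉ spectrum ℂ (h : Matrix (Fin p) (Fin p) ℂ))
    (t : ℕ) (ht : 0 < t) (hconj : IsConj h (h ^ t)) :
    t ≡ 1 [MOD q] :=
  stmt12_general p q hp hq hpq h hord hspec t hconj
end

section
/- Let q be a prime, let p be a prime not dividing q−1, and let n : ℤ/qℤ → ℕ be a function with n(0) = 0 and Σ_{k ∈ ℤ/qℤ} n(k) = p. If t is a unit of ℤ/qℤ such that n(t·k) = n(k) for all k ∈ ℤ/qℤ, then t = 1. -/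
/-! Restrict `n` to the units: since `n 0 = 0`, the values of `n` on `(ZMod q)ˣ` still sum to `p`.
Invariance under `t` makes `n` constant on the cosets of `⟨t⟩`, each of size `orderOf t`, so
`orderOf t ∣ p`. As `orderOf t` also divides `q - 1 = #(ZMod q)ˣ` and `p ∤ q - 1`, it is `1`. -/

theorem Subgroup.card_dvd_sum_of_mul_right_invariant {G R : Type*} [Group G] [Fintype G]
    [Semiring R] (H : Subgroup G) (f : G → R) (hf : ∀ g, ∀ h ∈ H, f (g * h) = f g) :
    (Nat.card H : R) ∣ ∑ g, f g := by
  classical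
  let e : G ≃ H × (Set.univ : Set (G ⧸ H)) :=
    (Equiv.Set.univ G).symm.trans (QuotientGroup.preimageMkEquivSubgroupProdSet H Set.univ)
  refine ⟨∑ c : (Set.univ : Set (G ⧸ H)), f (c : G ⧸ H).out, ?_⟩
  calc ∑ g, f g = ∑ x : H × (Set.univ : Set (G ⧸ H)), f ((x.2 : G ⧸ H).out * x.1) :=
        (Fintype.sum_equiv e.symm _ _ fun _ => rfl).symm
    _ = ∑ x : H × (Set.univ : Set (G ⧸ H)), f (x.2 : G ⧸ H).out :=
        Fintype.sum_congr _ _ fun x => hf _ x.1 x.1.2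
    _ = _ := by
      simp only [Fintype.sum_prod_type, Finset.sum_const, Finset.card_univ, nsmul_eq_mul,
        Nat.card_eq_fintype_card]

theorem orderOf_dvd_sum_of_mul_right_invariant_s13 {G R : Type*} [Group G] [Fintype G]
    [Semiring R] (t : G) (f : G → R) (hf : ∀ g, f (g * t) = f g) :
    (orderOf t : R) ∣ ∑ g, f g := by
  rw [← Nat.card_zpowers]
  refine (Subgroup.zpowers t).card_dvd_sum_of_mul_right_invariant f fun g h hh => ?_
  obtain ⟨k, rfl⟩ := Subgroup.mem_zpowers_iff.mp hh
  clear hh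
  induction k using Int.induction_on generalizing g with
  | zero => simp
  | succ k ih => rw [zpow_add_one, ← mul_assoc, hf, ih]
  | pred k ih =>
    rw [zpow_sub_one, ← mul_assoc, ← hf (g * t ^ (-(k : ℤ)) * t⁻¹), inv_mul_cancel_right, ih]

theorem sum_units_eq_sum_of_map_zero {G₀ M : Type*} [GroupWithZero G₀] [Fintype G₀]
    [Fintype G₀ˣ] [AddCommMonoid M] (f : G₀ → M) (h0 : f 0 = 0) :
    ∑ u : G₀ˣ, f u = ∑ a, f a := by
  classical
  rw [Fintype.sum_equiv unitsEquivNeZero (fun u : G₀ˣ => f u) (fun a => f a) fun _ => rfl,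
    ← Finset.sum_subtype (Finset.univ.erase 0) (by simp), Finset.sum_erase _ h0]

theorem stmt13 (q p : ℕ) [hq : Fact q.Prime] (hp : p.Prime) (hdvd : ¬ p ∣ (q - 1))
    (n : ZMod q → ℕ) (h0 : n 0 = 0) (hsum : ∑ k, n k = p)
    (t : (ZMod q)ˣ) (ht : ∀ k : ZMod q, n ((t : ZMod q) * k) = n k) :
    t = 1 := by
  have hdvd_p : orderOf t ∣ p := by
    rw [← hsum, ← sum_units_eq_sum_of_map_zero n h0]
    exact_mod_cast orderOf_dvd_sum_of_mul_right_invariant_s13 t (fun u => n u) fun u => by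
      rw [Units.val_mul, mul_comm, ht]
  have hdvd_q : orderOf t ∣ q - 1 := ZMod.card_units q ▸ orderOf_dvd_card
  rcases (Nat.dvd_prime hp).1 hdvd_p with h | h
  · exact orderOf_eq_one_iff.mp h
  · exact absurd (h ▸ hdvd_q) hdvd
end

section
/- Let p be an odd prime and let a : Fin p → ℤ/pℤ be a p-tuple of elements of the field with p elements. Suppose that the k-th elementary symmetric polynomial of a vanishes for every k with 1 ≤ k ≤ p−1, and that the p-th elementary symmetric polynomial of a (the product of all the a_i) is nonzero. Then a is constant: a_i = a_j for all i, j (and each a_i is nonzero). -/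
theorem stmt14 (p : ℕ) (hp : p.Prime) (hodd : Odd p) (a : Fin p → ZMod p)
    (hvanish : ∀ k : ℕ, 1 ≤ k → k ≤ p - 1 →
      ∑ s ∈ Finset.powersetCard k (Finset.univ : Finset (Fin p)), ∏ i ∈ s, a i = 0)
    (hprod : ∏ i, a i ≠ 0) :
    (∀ i j, a i = a j) ∧ ∀ i, a i ≠ 0 := by
  haveI : Fact p.Prime := ⟨hp⟩
  set s : Multiset (ZMod p) := (Finset.univ.val.map a) with hs
  have hcard : Multiset.card s = p := by simp [hs]
  have hes : ∀ k, s.esymm k = ∑ t ∈ Finset.powersetCard k (Finset.univ : Finset (Fin p)),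
      ∏ i ∈ t, a i := fun k => Finset.esymm_map_val a Finset.univ k
  have hesp : s.esymm p = ∏ i, a i := by
    rw [hes]
    have : (Finset.univ : Finset (Fin p)).powersetCard p = {Finset.univ} := by
      simpa using Finset.powersetCard_self (Finset.univ : Finset (Fin p))
    rw [this, Finset.sum_singleton]
  have key : ∀ i, a i = ∏ j, a j := by
    intro i
    have h0 := congrArg (Polynomial.eval (a i)) (Multiset.prod_X_sub_X_eq_sum_esymm s)
    rw [Polynomial.eval_multiset_prod] at h0
    have hl : (Multiset.map (Polynomial.eval (a i)) (Multiset.map (fun t => Polynomial.X - Polynomial.C t) s)).prod = 0 := by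
      apply Multiset.prod_eq_zero
      simp only [Multiset.mem_map]
      exact ⟨Polynomial.X - Polynomial.C (a i), ⟨a i, by rw [hs]; exact Multiset.mem_map_of_mem a (Finset.mem_univ i), rfl⟩, by simp⟩
    rw [hl] at h0
    simp only [Polynomial.eval_finset_sum, Polynomial.eval_mul, Polynomial.eval_pow,
      Polynomial.eval_neg, Polynomial.eval_one, Polynomial.eval_C, Polynomial.eval_X,
      hcard] at h0
    rw [Finset.sum_range_succ] at h0
    have hmid : ∑ j ∈ Finset.range p, (-1 : ZMod p) ^ j * (s.esymm j * a i ^ (p - j))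
        = a i := by
      rw [Finset.sum_eq_single_of_mem 0 (Finset.mem_range.2 hp.pos)]
      · simp [Multiset.esymm, ZMod.pow_card]
      · intro j hj hj0
        have : s.esymm j = 0 := by
          rw [hes]
          exact hvanish j (Nat.one_le_iff_ne_zero.2 hj0)
            (Nat.le_sub_one_of_lt (Finset.mem_range.1 hj))
        simp [this]
    rw [hmid, hesp, hodd.neg_one_pow] at h0
    simp at h0
    linear_combination -h0
  refine ⟨fun i j => by rw [key i, key j], fun i h => hprod ?_⟩
  exact Finset.prod_eq_zero (Finset.mem_univ i) h
end
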